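/- Let G be a finite simple graph with an nd-decomposition P_1, ..., P_k with every part nonempty, let T be the associated type graph on {1, ..., k}, and let 𝓘 denote the family of maximal independent sets of T. Then the chromatic number χ(G) equals the minimum of Σ_{I ∈ 𝓘} x(I) over all x : 𝓘 → ℕ satisfying: for each i with P_i inducing a clique, Σ_{I ∈ 𝓘, i ∈ I} x(I) ≥ |P_i|; and for each i with P_i inducing an independent set, Σ_{I ∈ 𝓘, i ∈ I} x(I) ≥ 1. -/

import Mathlib

/-- A set of vertices is independent if no two of its vertices are adjacent. -/
def SimpleGraph.IsIndep {V : Type*} (G : SimpleGraph V) (s : Set V) : Prop :=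
  s.Pairwise fun u v => ¬ G.Adj u v

/-- The type graph of a partition `P` of the vertices of `G`: distinct indices `i, j` are
adjacent iff all edges between `P i` and `P j` are present in `G`. -/
def typeGraph {V : Type*} (G : SimpleGraph V) {k : ℕ} (P : Fin k → Finset V) :
    SimpleGraph (Fin k) where
  Adj i j := i ≠ j ∧ ∀ u ∈ P i, ∀ v ∈ P j, G.Adj u v
  symm := by
    constructor
    intro i j h
    exact ⟨h.1.symm, fun u hu v hv => (h.2 v hv u hu).symm⟩
  loopless := by
    constructor
    intro i h
    exact h.1 rfl

open Classical in
/-- The family of maximal independent sets of a graph on `Fin k`. -/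
noncomputable def maxIndepSets {k : ℕ} (T : SimpleGraph (Fin k)) :
    Finset (Finset (Fin k)) :=
  Finset.univ.filter fun I =>
    T.IsIndep ↑I ∧ ∀ J : Finset (Fin k), T.IsIndep ↑J → I ⊆ J → I = J

/-!
Colour classes of a proper colouring of `G` meet sets of parts that are independent in the type
graph, so assigning each colour to a maximal independent set containing its parts gives a
covering of the same weight. Conversely, a covering `x` provides `x I` colours "reserved" for each
maximal independent set `I`; every part may use the colours reserved for the sets containing it,
a clique part needing distinct ones. Adjacent vertices in different parts lie in parts adjacent in
the type graph, which no independent set contains both of, so they receive different colours.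
-/

open Finset

namespace SimpleGraph

variable {V α : Type*} (G : SimpleGraph V)

theorem colorable_of_forall_adj_ne (f : V → α) (s : Finset α) (hs : ∀ v, f v ∈ s)
    (hf : ∀ ⦃u v⦄, G.Adj u v → f u ≠ f v) : G.Colorable #s := by
  simpa using (Coloring.mk (fun v => (⟨f v, hs v⟩ : s))
    fun huv heq => hf huv (congrArg Subtype.val heq)).colorable

theorem exists_isLeast_colorable [Fintype V] :
    ∃ n : ℕ, G.chromaticNumber = n ∧ IsLeast {n | G.Colorable n} n := by
  refine ⟨G.chromaticNumber.toNat, ?_, G.colorable_chromaticNumber_of_fintype, fun m hm => ?_⟩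
  · exact (ENat.natCast_toNat <|
      G.chromaticNumber_ne_top_iff_exists.2 ⟨_, G.colorable_of_fintype⟩).symm
  · exact ENat.toNat_le_of_le_natCast hm.chromaticNumber_le

end SimpleGraph

theorem Finset.exists_mapsTo_injOn_of_card_le {α β : Type*} [Nonempty β] {s : Finset α}
    {t : Finset β} (h : #s ≤ #t) : ∃ f : α → β, Set.MapsTo f s t ∧ Set.InjOn f s := by
  obtain ⟨f, hf, hinj⟩ := s.finite_toSet.exists_injOn_of_encard_le (t := (t : Set β))
    (by simpa only [Set.encard_coe_eq_coe_finsetCard, Nat.cast_le])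
  exact ⟨f, hf, hinj⟩

theorem mem_maxIndepSets {k : ℕ} {T : SimpleGraph (Fin k)} {I : Finset (Fin k)} :
    I ∈ maxIndepSets T ↔ Maximal (fun J : Finset (Fin k) => T.IsIndep ↑J) I := by
  classical
  simp [maxIndepSets, maximal_iff]

theorem exists_mem_maxIndepSets_superset {k : ℕ} (T : SimpleGraph (Fin k)) {I : Finset (Fin k)}
    (hI : T.IsIndep ↑I) : ∃ J ∈ maxIndepSets T, I ⊆ J := by
  obtain ⟨J, hIJ, hJ⟩ := Finite.exists_le_maximal (p := fun J : Finset (Fin k) => T.IsIndep ↑J) hI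
  exact ⟨J, mem_maxIndepSets.2 hJ, hIJ⟩

structure IsNdDecomposition {V : Type*} (G : SimpleGraph V) {k : ℕ} (P : Fin k → Finset V) :
    Prop where
  existsUnique_mem : ∀ v : V, ∃! i : Fin k, v ∈ P i
  isClique_or_isIndep : ∀ i : Fin k, G.IsClique ↑(P i) ∨ G.IsIndep ↑(P i)
  homogeneous : ∀ i j : Fin k, i ≠ j →
    (∀ u ∈ P i, ∀ v ∈ P j, G.Adj u v) ∨ (∀ u ∈ P i, ∀ v ∈ P j, ¬ G.Adj u v)

def coveringWeights {V : Type*} (G : SimpleGraph V) {k : ℕ} (P : Fin k → Finset V)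
    (𝓘 : Finset (Finset (Fin k))) : Set ℕ :=
  {m : ℕ | ∃ x : Finset (Fin k) → ℕ,
    (∀ i : Fin k, G.IsClique ↑(P i) → (P i).card ≤ ∑ I ∈ 𝓘.filter (fun I => i ∈ I), x I) ∧
    (∀ i : Fin k, G.IsIndep ↑(P i) → 1 ≤ ∑ I ∈ 𝓘.filter (fun I => i ∈ I), x I) ∧
    m = ∑ I ∈ 𝓘, x I}

section

variable {V α : Type*} {G : SimpleGraph V} {k : ℕ} {P : Fin k → Finset V}

theorem isIndep_typeGraph_of_forall_exists_color (C : G.Coloring α) (c : α) {s : Set (Fin k)}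
    (hs : ∀ i ∈ s, ∃ v ∈ P i, C v = c) : (typeGraph G P).IsIndep s := by
  intro i hi j hj _ hij
  obtain ⟨u, hu, rfl⟩ := hs i hi
  obtain ⟨v, hv, hvu⟩ := hs j hj
  exact C.valid (hij.2 u hu v hv) hvu.symm

theorem card_mem_coveringWeights [Fintype α] (hne : ∀ i, (P i).Nonempty)
    {𝓘 : Finset (Finset (Fin k))}
    (hext : ∀ I : Finset (Fin k), (typeGraph G P).IsIndep ↑I → ∃ J ∈ 𝓘, I ⊆ J)
    (C : G.Coloring α) : Fintype.card α ∈ coveringWeights G P 𝓘 := by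
  classical
  choose J hJ𝓘 hJ using fun c => hext {i | ∃ v ∈ P i, C v = c}
    (isIndep_typeGraph_of_forall_exists_color C c (by simp))
  have hmemJ (i : Fin k) (v : V) (hv : v ∈ P i) : i ∈ J (C v) := hJ _ (by simpa using ⟨v, hv, rfl⟩)
  have hcover (i : Fin k) : ∑ I ∈ 𝓘 with i ∈ I, #{c | J c = I} = #{c | i ∈ J c} := by
    rw [sum_card_fiberwise_eq_card_filter]
    simp [hJ𝓘]
  refine ⟨fun I => #{c | J c = I}, fun i hi => ?_, fun i _ => ?_, ?_⟩
  · rw [hcover]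
    refine card_le_card_of_injOn C (fun v hv => by simpa using hmemJ i v hv) ?_
    exact fun u hu v hv huv => by_contra fun h => C.valid (hi hu hv h) huv
  · obtain ⟨v, hv⟩ := hne i
    rw [hcover]
    exact card_pos.2 ⟨C v, by simpa using hmemJ i v hv⟩
  · rw [← card_univ, card_eq_sum_card_fiberwise (fun c _ => hJ𝓘 c)]

end

def reservedColors {k : ℕ} (𝓘 : Finset (Finset (Fin k))) (x : Finset (Fin k) → ℕ) :
    Finset (Σ _ : Finset (Fin k), ℕ) :=
  𝓘.sigma fun I => range (x I)

theorem card_reservedColors {k : ℕ} (𝓘 : Finset (Finset (Fin k))) (x : Finset (Fin k) → ℕ) :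
    #(reservedColors 𝓘 x) = ∑ I ∈ 𝓘, x I := by
  simp [reservedColors]

namespace IsNdDecomposition

variable {V : Type*} {G : SimpleGraph V} {k : ℕ} {P : Fin k → Finset V}

noncomputable def part (hP : IsNdDecomposition G P) (v : V) : Fin k :=
  (hP.existsUnique_mem v).choose

theorem mem_part (hP : IsNdDecomposition G P) (v : V) : v ∈ P (hP.part v) :=
  (hP.existsUnique_mem v).choose_spec.1

theorem isClique_of_adj (hP : IsNdDecomposition G P) {i : Fin k} {u v : V} (hu : u ∈ P i)
    (hv : v ∈ P i) (huv : G.Adj u v) : G.IsClique ↑(P i) :=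
  (hP.isClique_or_isIndep i).resolve_right fun h => h hu hv (G.ne_of_adj huv) huv

theorem typeGraph_adj (hP : IsNdDecomposition G P) {i j : Fin k} (hij : i ≠ j) {u v : V}
    (hu : u ∈ P i) (hv : v ∈ P j) (huv : G.Adj u v) : (typeGraph G P).Adj i j :=
  ⟨hij, (hP.homogeneous i j hij).resolve_right fun h => h u hu v hv huv⟩

theorem colorable_of_mem_coveringWeights (hP : IsNdDecomposition G P)
    {𝓘 : Finset (Finset (Fin k))} (hind : ∀ I ∈ 𝓘, (typeGraph G P).IsIndep ↑I) {m : ℕ}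
    (hm : m ∈ coveringWeights G P 𝓘) : G.Colorable m := by
  classical
  obtain ⟨x, hcl, hidp, rfl⟩ := hm
  have hcolor (i : Fin k) : ∃ f : V → Σ _ : Finset (Fin k), ℕ,
      Set.MapsTo f (P i) (reservedColors {I ∈ 𝓘 | i ∈ I} x) ∧
        (G.IsClique ↑(P i) → Set.InjOn f (P i)) := by
    by_cases hc : G.IsClique ↑(P i)
    · obtain ⟨f, hmaps, hinj⟩ := exists_mapsTo_injOn_of_card_le
        (hcl i hc |>.trans_eq (card_reservedColors _ x).symm)
      exact ⟨f, hmaps, fun _ => hinj⟩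
    · obtain ⟨a, ha⟩ : (reservedColors {I ∈ 𝓘 | i ∈ I} x).Nonempty := by
        rw [← card_pos, card_reservedColors]
        exact hidp i ((hP.isClique_or_isIndep i).resolve_left hc)
      exact ⟨fun _ => a, fun _ _ => ha, fun h => absurd h hc⟩
  choose f hmaps hinj using hcolor
  have hf (v : V) : f (hP.part v) v ∈ reservedColors {I ∈ 𝓘 | hP.part v ∈ I} x :=
    hmaps _ (hP.mem_part v)
  simp only [reservedColors, mem_sigma, mem_filter] at hf
  rw [← card_reservedColors]
  refine G.colorable_of_forall_adj_ne (fun v => f (hP.part v) v) _ (fun v => ?_) fun u v huv => ?_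
  · exact sigma_mono (filter_subset _ 𝓘) (fun _ => subset_rfl) (hmaps _ (hP.mem_part v))
  · by_cases hij : hP.part u = hP.part v
    · have hv := hP.mem_part v
      rw [← hij] at hv ⊢
      exact fun h => G.ne_of_adj huv <|
        hinj _ (hP.isClique_of_adj (hP.mem_part u) hv huv) (hP.mem_part u) hv h
    · intro h
      have hv := (hf v).1.2
      rw [← h] at hv
      exact hind _ (hf u).1.1 (hf u).1.2 hv hij
        (hP.typeGraph_adj hij (hP.mem_part u) (hP.mem_part v) huv)

end IsNdDecomposition

/-- Let `G` have an nd-decomposition `P_1, …, P_k` with all parts nonempty, with type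
graph `T` and family `𝓘` of maximal independent sets of `T`.  Then `χ(G)` equals the
minimum of `Σ_I x I` over all `x : 𝓘 → ℕ` satisfying the covering constraints
(`Σ_{I ∋ i} x I ≥ |P i|` for clique parts and `Σ_{I ∋ i} x I ≥ 1` for
independent-set parts). -/
theorem chromaticNumber_eq_min_covering {V : Type*} [Fintype V] (G : SimpleGraph V)
    (k : ℕ) (P : Fin k → Finset V)
    (hpart : ∀ v : V, ∃! i : Fin k, v ∈ P i)
    (hne : ∀ i : Fin k, (P i).Nonempty)
    (hcliqueIndep : ∀ i : Fin k, G.IsClique ↑(P i) ∨ G.IsIndep ↑(P i))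
    (hhom : ∀ i j : Fin k, i ≠ j →
      (∀ u ∈ P i, ∀ v ∈ P j, G.Adj u v) ∨ (∀ u ∈ P i, ∀ v ∈ P j, ¬ G.Adj u v)) :
    ∃ n : ℕ, G.chromaticNumber = (n : ℕ∞) ∧
      IsLeast {m : ℕ | ∃ x : Finset (Fin k) → ℕ,
        (∀ i : Fin k, G.IsClique ↑(P i) →
          (P i).card ≤ ∑ I ∈ (maxIndepSets (typeGraph G P)).filter (fun I => i ∈ I), x I) ∧
        (∀ i : Fin k, G.IsIndep ↑(P i) →
          1 ≤ ∑ I ∈ (maxIndepSets (typeGraph G P)).filter (fun I => i ∈ I), x I) ∧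
        m = ∑ I ∈ maxIndepSets (typeGraph G P), x I} n := by
  have hP : IsNdDecomposition G P := ⟨hpart, hcliqueIndep, hhom⟩
  have hind : ∀ I ∈ maxIndepSets (typeGraph G P), (typeGraph G P).IsIndep ↑I :=
    fun I hI => (mem_maxIndepSets.1 hI).prop
  have hweights : coveringWeights G P (maxIndepSets (typeGraph G P)) = {n | G.Colorable n} := by
    ext n
    refine ⟨hP.colorable_of_mem_coveringWeights hind, fun ⟨C⟩ => ?_⟩
    simpa using card_mem_coveringWeights hne (fun I => exists_mem_maxIndepSets_superset _) C
  obtain ⟨n, hχ, hleast⟩ := G.exists_isLeast_colorable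
  refine ⟨n, hχ, ?_⟩
  change IsLeast (coveringWeights G P (maxIndepSets (typeGraph G P))) n
  rwa [hweights]
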